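/- arXiv:2207.02822 — 8 statements merged into one kernel-verified Lean document; each statement's English description precedes it below -/
import Mathlib

section
/- For one-bounded expectations X, Y, Z on program states, separating multiplication is associative: X ⋆ (Y ⋆ Z) = (X ⋆ Y) ⋆ Z. -/
open ENNReal

abbrev Heap := ℤ → Option ℤ
abbrev Stack := String → ℤ
abbrev PState := Stack × Heap
abbrev Exp := PState → ℝ≥0∞

/-- Heaps are disjoint if their domains are disjoint. -/
def HDisj (h₁ h₂ : Heap) : Prop := ∀ l, h₁ l = none ∨ h₂ l = none

/-- Disjoint union of heaps. -/
def HJoin (h₁ h₂ : Heap) : Heap := fun l => (h₁ l).orElse (fun _ => h₂ l)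

/-- Separating multiplication: (X ⋆ Y)(s,h) = sup { X(s,h₁)·Y(s,h₂) | h₁ ⋆ h₂ = h }. -/
noncomputable def sepMul (X Y : Exp) : Exp := fun σ =>
  ⨆ h₁, ⨆ h₂, ⨆ (_ : HDisj h₁ h₂ ∧ HJoin h₁ h₂ = σ.2), X (σ.1, h₁) * Y (σ.1, h₂)

/-- One-bounded expectations take values in [0,1]. -/
def OneBounded (X : Exp) : Prop := ∀ σ, X σ ≤ 1

/-- Qualitative expectations take values in {0,1}. -/
def Qualitative (φ : Exp) : Prop := ∀ σ, φ σ = 0 ∨ φ σ = 1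

/-- Guarded magic wand: (φ -⋆ X)(s,h) = inf { X(s, h ⋆ h') | φ(s,h') = 1, h' ⊥ h },
with the infimum of the empty set being 1 (for one-bounded X). -/
noncomputable def wand (φ X : Exp) : Exp := fun σ =>
  (⨅ h' : {h' : Heap // φ (σ.1, h') = 1 ∧ HDisj σ.2 h'}, X (σ.1, HJoin σ.2 h'.1)) ⊓ 1

lemma HJoin_assoc (a b c : Heap) : HJoin (HJoin a b) c = HJoin a (HJoin b c) := by
  funext l; simp only [HJoin]; cases a l <;> rfl

lemma HJoin_eq_none {a b : Heap} {l : ℤ} (h : HJoin a b l = none) :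
    a l = none ∧ b l = none := by
  simp only [HJoin] at h; cases ha : a l <;> rw [ha] at h <;> simp_all

lemma HJoin_none {a b : Heap} {l : ℤ} (ha : a l = none) (hb : b l = none) :
    HJoin a b l = none := by simp [HJoin, ha, hb]

lemma le_sepMul (X Y : Exp) (s : Stack) (h₁ h₂ : Heap) (hd : HDisj h₁ h₂) :
    X (s, h₁) * Y (s, h₂) ≤ sepMul X Y (s, HJoin h₁ h₂) :=
  le_iSup_of_le h₁ (le_iSup_of_le h₂ (le_iSup_of_le ⟨hd, rfl⟩ le_rfl))

lemma sepMul_le (X Y : Exp) (σ : PState) {c : ℝ≥0∞}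
    (h : ∀ h₁ h₂, HDisj h₁ h₂ → HJoin h₁ h₂ = σ.2 → X (σ.1, h₁) * Y (σ.1, h₂) ≤ c) :
    sepMul X Y σ ≤ c := by
  refine iSup_le fun h₁ => iSup_le fun h₂ => iSup_le fun ⟨hd, hj⟩ => h h₁ h₂ hd hj

theorem sepMul_assoc (X Y Z : Exp)
    (hX : OneBounded X) (hY : OneBounded Y) (hZ : OneBounded Z) :
    sepMul X (sepMul Y Z) = sepMul (sepMul X Y) Z := by
  funext σ
  obtain ⟨s, h⟩ := σ
  apply le_antisymm
  · refine sepMul_le _ _ _ fun h₁ h₂ hd hj => ?_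
    conv_lhs => rw [sepMul]
    rw [ENNReal.mul_iSup]
    refine iSup_le fun h₃ => ?_
    rw [ENNReal.mul_iSup]
    refine iSup_le fun h₄ => ?_
    rw [ENNReal.mul_iSup]
    refine iSup_le fun ⟨hd', hj'⟩ => ?_
    subst hj'
    have d13 : HDisj h₁ h₃ := fun l => by
      rcases hd l with hl | hl
      · exact Or.inl hl
      · exact Or.inr (HJoin_eq_none hl).1
    have d134 : HDisj (HJoin h₁ h₃) h₄ := fun l => by
      rcases hd l with hl | hl
      · rcases hd' l with hl' | hl'
        · exact Or.inl (HJoin_none hl hl')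
        · exact Or.inr hl'
      · obtain ⟨h3n, h4n⟩ := HJoin_eq_none hl
        exact Or.inr h4n
    calc X (s, h₁) * (Y (s, h₃) * Z (s, h₄))
        = X (s, h₁) * Y (s, h₃) * Z (s, h₄) := (mul_assoc _ _ _).symm
      _ ≤ sepMul X Y (s, HJoin h₁ h₃) * Z (s, h₄) :=
          mul_le_mul_left (le_sepMul X Y s h₁ h₃ d13) _
      _ ≤ sepMul (sepMul X Y) Z (s, HJoin (HJoin h₁ h₃) h₄) :=
          le_sepMul _ _ s _ _ d134
      _ = sepMul (sepMul X Y) Z (s, h) := by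
          rw [HJoin_assoc]; subst hj; rfl
  · refine sepMul_le _ _ _ fun h₁ h₂ hd hj => ?_
    conv_lhs => rw [sepMul]
    rw [ENNReal.iSup_mul]
    refine iSup_le fun h₃ => ?_
    rw [ENNReal.iSup_mul]
    refine iSup_le fun h₄ => ?_
    rw [ENNReal.iSup_mul]
    refine iSup_le fun ⟨hd', hj'⟩ => ?_
    subst hj'
    have d42 : HDisj h₄ h₂ := fun l => by
      rcases hd l with hl | hl
      · exact Or.inl (HJoin_eq_none hl).2
      · exact Or.inr hl
    have d342 : HDisj h₃ (HJoin h₄ h₂) := fun l => by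
      rcases hd l with hl | hl
      · obtain ⟨h3n, h4n⟩ := HJoin_eq_none hl
        exact Or.inl h3n
      · rcases hd' l with hl' | hl'
        · exact Or.inl hl'
        · exact Or.inr (HJoin_none hl' hl)
    calc X (s, h₃) * Y (s, h₄) * Z (s, h₂)
        = X (s, h₃) * (Y (s, h₄) * Z (s, h₂)) := mul_assoc _ _ _
      _ ≤ X (s, h₃) * sepMul Y Z (s, HJoin h₄ h₂) :=
          mul_le_mul_right (le_sepMul Y Z s h₄ h₂ d42) _
      _ ≤ sepMul X (sepMul Y Z) (s, HJoin h₃ (HJoin h₄ h₂)) :=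
          le_sepMul _ _ s _ _ d342
      _ = sepMul X (sepMul Y Z) (s, h) := by
          rw [← HJoin_assoc]; subst hj; rfl
end

section
/- Separating multiplication distributes over pointwise maximum: X ⋆ max(Y, Z) = max(X ⋆ Y, X ⋆ Z) for one-bounded expectations X, Y, Z. -/
open ENNReal

theorem sepMul_max_general (X Y Z : Exp) :
    sepMul X (fun σ => max (Y σ) (Z σ)) =
      fun σ => max (sepMul X Y σ) (sepMul X Z σ) := by
  funext σ
  simp only [sepMul, mul_max, ← iSup_sup_eq]

theorem sepMul_max (X Y Z : Exp)
    (hX : OneBounded X) (hY : OneBounded Y) (hZ : OneBounded Z) :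
    sepMul X (fun σ => max (Y σ) (Z σ)) =
      fun σ => max (sepMul X Y σ) (sepMul X Z σ) :=
  sepMul_max_general X Y Z
end

section
/- For a qualitative expectation φ (taking only values 0 and 1) and one-bounded expectations Y, Z, separating multiplication is subdistributive over pointwise multiplication: φ ⋆ (Y · Z) ≤ (φ ⋆ Y) · (φ ⋆ Z). -/
open ENNReal

theorem sepMul_subdist_mul (φ Y Z : Exp)
    (hφ : Qualitative φ) (hY : OneBounded Y) (hZ : OneBounded Z) :
    ∀ σ, sepMul φ (fun τ => Y τ * Z τ) σ ≤ sepMul φ Y σ * sepMul φ Z σ := by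
  intro σ
  unfold sepMul
  refine iSup_le fun h₁ => iSup_le fun h₂ => iSup_le fun hc => ?_
  rcases hφ (σ.1, h₁) with h0 | h1
  · simp [h0]
  · have hYle : φ (σ.1, h₁) * Y (σ.1, h₂) ≤ sepMul φ Y σ := by
      exact le_iSup_of_le h₁ (le_iSup_of_le h₂ (le_iSup_of_le hc le_rfl))
    have hZle : φ (σ.1, h₁) * Z (σ.1, h₂) ≤ sepMul φ Z σ := by
      exact le_iSup_of_le h₁ (le_iSup_of_le h₂ (le_iSup_of_le hc le_rfl))
    calc φ (σ.1, h₁) * (Y (σ.1, h₂) * Z (σ.1, h₂))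
        = (φ (σ.1, h₁) * Y (σ.1, h₂)) * (φ (σ.1, h₁) * Z (σ.1, h₂)) := by
          rw [h1]; ring
      _ ≤ sepMul φ Y σ * sepMul φ Z σ := mul_le_mul' hYle hZle
end

section
/- Separating multiplication is subdistributive over pointwise addition: X ⋆ (Y + Z) ≤ (X ⋆ Y) + (X ⋆ Z) for one-bounded expectations, where the right side may exceed 1 and is compared as a real-valued inequality. -/
open ENNReal

theorem sepMul_subdist_add (X Y Z : Exp)
    (hX : OneBounded X) (hY : OneBounded Y) (hZ : OneBounded Z) :
    ∀ σ, sepMul X (fun τ => Y τ + Z τ) σ ≤ sepMul X Y σ + sepMul X Z σ := by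
  intro σ
  refine iSup_le fun h₁ => iSup_le fun h₂ => iSup_le fun hc => ?_
  rw [mul_add]
  gcongr
  · exact le_iSup_of_le h₁ (le_iSup_of_le h₂ (le_iSup_of_le hc le_rfl))
  · exact le_iSup_of_le h₁ (le_iSup_of_le h₂ (le_iSup_of_le hc le_rfl))
end

section
/- Adjointness of separating multiplication and the guarded magic wand: for a qualitative expectation φ and one-bounded expectations X, Y, one has X ⋆ φ ≤ Y if and only if X ≤ φ -⋆ Y. -/
open ENNReal

/-! Both inequalities unfold to the same pointwise condition: `X (s, h₁) ≤ Y (s, h₁ ⋆ h₂)`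
whenever `h₁ ⊥ h₂` and `φ (s, h₂) = 1`. On the `⋆` side this uses that `φ` is qualitative, so
each product `X (s, h₁) * φ (s, h₂)` is either `0` or `X (s, h₁)`; on the wand side it uses that
`X` is one-bounded, so the truncation `⊓ 1` in the wand is harmless. -/

lemma sepMul_le_iff {X Y : Exp} {σ : PState} {a : ℝ≥0∞} :
    sepMul X Y σ ≤ a ↔
      ∀ h₁ h₂, HDisj h₁ h₂ → HJoin h₁ h₂ = σ.2 → X (σ.1, h₁) * Y (σ.1, h₂) ≤ a := by
  simp only [sepMul, iSup_le_iff, and_imp]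

lemma le_wand_iff {φ Y : Exp} {σ : PState} {a : ℝ≥0∞} :
    a ≤ wand φ Y σ ↔
      a ≤ 1 ∧ ∀ h', φ (σ.1, h') = 1 → HDisj σ.2 h' → a ≤ Y (σ.1, HJoin σ.2 h') := by
  simp only [wand, le_inf_iff, le_iInf_iff, Subtype.forall, and_imp]
  exact and_comm

lemma sepMul_le_iff_of_qualitative {φ X Y : Exp} (hφ : Qualitative φ) :
    (∀ σ, sepMul X φ σ ≤ Y σ) ↔
      ∀ s h₁ h₂, HDisj h₁ h₂ → φ (s, h₂) = 1 → X (s, h₁) ≤ Y (s, HJoin h₁ h₂) := by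
  constructor
  · intro h s h₁ h₂ hd hφ₂
    simpa [hφ₂] using sepMul_le_iff.1 (h (s, HJoin h₁ h₂)) h₁ h₂ hd rfl
  · rintro h ⟨s, _⟩
    refine sepMul_le_iff.2 fun h₁ h₂ hd hj => ?_
    obtain rfl : HJoin h₁ h₂ = _ := hj
    rcases hφ (s, h₂) with hφ₂ | hφ₂
    · simp [hφ₂]
    · simpa [hφ₂] using h s h₁ h₂ hd hφ₂

lemma le_wand_iff_of_oneBounded {φ X Y : Exp} (hX : OneBounded X) :
    (∀ σ, X σ ≤ wand φ Y σ) ↔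
      ∀ s h₁ h₂, HDisj h₁ h₂ → φ (s, h₂) = 1 → X (s, h₁) ≤ Y (s, HJoin h₁ h₂) :=
  ⟨fun h s h₁ h₂ hd hφ₂ => (le_wand_iff.1 (h (s, h₁))).2 h₂ hφ₂ hd,
    fun h σ => le_wand_iff.2 ⟨hX σ, fun h' hφ' hd => h σ.1 σ.2 h' hd hφ'⟩⟩

theorem sepMul_wand_adjoint_general (φ X Y : Exp)
    (hφ : Qualitative φ) (hX : OneBounded X) :
    (∀ σ, sepMul X φ σ ≤ Y σ) ↔ (∀ σ, X σ ≤ wand φ Y σ) :=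
  (sepMul_le_iff_of_qualitative hφ).trans (le_wand_iff_of_oneBounded hX).symm

theorem sepMul_wand_adjoint (φ X Y : Exp)
    (hφ : Qualitative φ) (hX : OneBounded X) (hY : OneBounded Y) :
    (∀ σ, sepMul X φ σ ≤ Y σ) ↔ (∀ σ, X σ ≤ wand φ Y σ) :=
  sepMul_wand_adjoint_general φ X Y hφ hX
end

section
/- The guarded magic wand is superdistributive over pointwise multiplication: for a qualitative expectation φ and one-bounded expectations X, Y, one has (φ -⋆ X) · (φ -⋆ Y) ≤ φ -⋆ (X · Y). -/
open ENNReal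

theorem wand_superdist_mul (φ X Y : Exp)
    (hφ : Qualitative φ) (hX : OneBounded X) (hY : OneBounded Y) :
    ∀ σ, wand φ X σ * wand φ Y σ ≤ wand φ (fun τ => X τ * Y τ) σ := by
  intro σ
  unfold wand
  apply le_inf
  · refine le_iInf fun h' => ?_
    calc wand φ X σ * wand φ Y σ ≤ X (σ.1, HJoin σ.2 h'.1) * Y (σ.1, HJoin σ.2 h'.1) := by
          exact mul_le_mul' (le_trans inf_le_left (iInf_le _ h')) (le_trans inf_le_left (iInf_le _ h'))
      _ = _ := rfl
  · calc wand φ X σ * wand φ Y σ ≤ 1 * 1 := mul_le_mul' (le_trans inf_le_right le_rfl) (le_trans inf_le_right le_rfl)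
      _ = 1 := one_mul 1
end

section
/- Frame-style inequality for the guarded magic wand: for a qualitative expectation φ and one-bounded expectations X, Y, one has (φ -⋆ X) ⋆ Y ≤ φ -⋆ (X ⋆ Y). -/
open ENNReal

lemma hjoin_none {h₁ h₂ : Heap} {l : ℤ} (h : HJoin h₁ h₂ l = none) :
    h₁ l = none ∧ h₂ l = none := by
  unfold HJoin at h
  cases e : h₁ l <;> simp [e, Option.orElse] at h <;> simp [h]

theorem wand_frame (φ X Y : Exp)
    (hφ : Qualitative φ) (hX : OneBounded X) (hY : OneBounded Y) :
    ∀ σ, sepMul (wand φ X) Y σ ≤ wand φ (sepMul X Y) σ := by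
  rintro ⟨s, h⟩
  simp only [sepMul]
  refine iSup_le fun h₁ => iSup_le fun h₂ => iSup_le fun ⟨hd, hj⟩ => ?_
  simp only [wand]
  refine le_inf (le_iInf fun ⟨h', hφ', hd'⟩ => ?_) ?_
  · -- product ≤ sepMul X Y (s, HJoin h h')
    have hd₁ : HDisj h₁ h' := fun l => by
      rcases hd' l with hl | hl
      · left; exact (hjoin_none (hj ▸ hl)).1
      · right; exact hl
    have hw : wand φ X (s, h₁) ≤ X (s, HJoin h₁ h') := by
      refine inf_le_left.trans ?_
      exact iInf_le (fun h'' : {h'' : Heap // φ (s, h'') = 1 ∧ HDisj h₁ h''} =>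
        X (s, HJoin h₁ h''.1)) ⟨h', hφ', hd₁⟩
    have hdisj : HDisj (HJoin h₁ h') h₂ := by
      intro l
      by_cases e : HJoin h₁ h' l = none
      · left; exact e
      · right
        unfold HJoin at e
        cases e₁ : h₁ l with
        | some v => exact (hd l).resolve_left (by simp [e₁])
        | none =>
          simp [e₁, Option.orElse] at e
          cases e' : h' l with
          | none => simp [e'] at e
          | some v =>
            rcases hd' l with hl | hl
            · exact (hjoin_none (hj ▸ hl)).2
            · simp [e'] at hl
    have hjoin : HJoin (HJoin h₁ h') h₂ = HJoin h h' := by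
      funext l
      have hjl : HJoin h₁ h₂ l = h l := congrFun hj l
      unfold HJoin at hjl ⊢
      cases e₁ : h₁ l with
      | some v => simp [e₁, Option.orElse]; simp [e₁, Option.orElse] at hjl; simp [← hjl, Option.orElse]
      | none =>
        simp [e₁, Option.orElse] at hjl ⊢
        cases e' : h' l with
        | none => cases e₂ : h₂ l <;> simp [Option.orElse, e₂, ← hjl, e']
        | some v =>
          rcases hd' l with hl | hl
          · have := hjoin_none (hj ▸ hl)
            simp [Option.orElse, this.2, ← hjl, this.1, e₁]
          · simp [e'] at hl
    calc wand φ X (s, h₁) * Y (s, h₂) ≤ X (s, HJoin h₁ h') * Y (s, h₂) :=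
          mul_le_mul_left hw _
      _ ≤ sepMul X Y (s, HJoin h h') := by
          simp only [sepMul]
          refine le_trans ?_ (le_iSup _ (HJoin h₁ h'))
          refine le_trans ?_ (le_iSup _ h₂)
          exact le_iSup_of_le ⟨hdisj, hjoin⟩ le_rfl
  · -- ≤ 1
    have : wand φ X (s, h₁) ≤ 1 := inf_le_right
    exact mul_le_one' this (hY _)
end

section
/- For a precise one-bounded expectation X, separating multiplication with X distributes over pointwise minimum: X ⋆ min(Y, Z) = min(X ⋆ Y, X ⋆ Z). -/
open ENNReal

/-- An expectation is precise if for every state at most one subheap of the heap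
gives it a nonzero value. -/
def Precise (X : Exp) : Prop := ∀ (s : Stack) (h : Heap),
  Set.Subsingleton
    {h1 : Heap | (∃ h2, HDisj h1 h2 ∧ HJoin h1 h2 = h) ∧ 0 < X (s, h1)}

/- Precision leaves at most one split h = h₁ ⋆ h₂ with X(s,h₁) > 0, and the heap
cancels, so h₂ is determined too. Hence (X ⋆ W)(s,h) = c · W(s,h₂) for constants c and h₂
independent of W (with c = 0 if there is no such split), and multiplication by c commutes
with min. -/

theorem hJoin_left_cancel {h₁ h₂ h₂' : Heap} (hd : HDisj h₁ h₂) (hd' : HDisj h₁ h₂')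
    (hj : HJoin h₁ h₂ = HJoin h₁ h₂') : h₂ = h₂' := by
  funext l
  have hjl := congrFun hj l
  cases hl : h₁ l with
  | none => simpa [HJoin, hl] using hjl
  | some v =>
    have h₂l : h₂ l = none := (hd l).resolve_left (by simp [hl])
    have h₂'l : h₂' l = none := (hd' l).resolve_left (by simp [hl])
    rw [h₂l, h₂'l]

theorem sepMul_eq_zero {X : Exp} (W : Exp) {s : Stack} {h : Heap}
    (hX : ∀ h₁ h₂, HDisj h₁ h₂ → HJoin h₁ h₂ = h → X (s, h₁) = 0) :
    sepMul X W (s, h) = 0 :=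
  ENNReal.iSup_eq_zero.2 fun h₁ => ENNReal.iSup_eq_zero.2 fun h₂ =>
    ENNReal.iSup_eq_zero.2 fun ⟨hd, hj⟩ => by rw [hX h₁ h₂ hd hj, zero_mul]

theorem Precise.sepMul_eq_mul {X : Exp} (hX : Precise X) (W : Exp) {s : Stack}
    {h h₁ h₂ : Heap} (hd : HDisj h₁ h₂) (hj : HJoin h₁ h₂ = h) (hpos : 0 < X (s, h₁)) :
    sepMul X W (s, h) = X (s, h₁) * W (s, h₂) := by
  refine le_antisymm (iSup_le fun h₁' => iSup_le fun h₂' => iSup_le fun ⟨hd', hj'⟩ => ?_)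
    (le_iSup_of_le h₁ <| le_iSup_of_le h₂ <| le_iSup_of_le ⟨hd, hj⟩ le_rfl)
  rcases eq_zero_or_pos (X (s, h₁')) with hzero | hpos'
  · rw [hzero, zero_mul]
    exact zero_le
  obtain rfl : h₁' = h₁ := hX s h ⟨⟨h₂', hd', hj'⟩, hpos'⟩ ⟨⟨h₂, hd, hj⟩, hpos⟩
  obtain rfl : h₂' = h₂ := hJoin_left_cancel hd' hd (hj'.trans hj.symm)
  exact le_rfl

theorem Precise.exists_sepMul_eq_mul {X : Exp} (hX : Precise X) (s : Stack) (h : Heap) :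
    ∃ (c : ℝ≥0∞) (h₂ : Heap), ∀ W, sepMul X W (s, h) = c * W (s, h₂) := by
  by_cases hsplit : ∃ h₁ h₂, HDisj h₁ h₂ ∧ HJoin h₁ h₂ = h ∧ 0 < X (s, h₁)
  · obtain ⟨h₁, h₂, hd, hj, hpos⟩ := hsplit
    exact ⟨X (s, h₁), h₂, fun W => hX.sepMul_eq_mul W hd hj hpos⟩
  · simp only [not_exists, not_and, not_lt] at hsplit
    refine ⟨0, h, fun W => ?_⟩
    rw [zero_mul]
    exact sepMul_eq_zero W fun h₁ h₂ hd hj => nonpos_iff_eq_zero.1 (hsplit h₁ h₂ hd hj)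

theorem precise_sepMul_min_general (X Y Z : Exp)
    (hprec : Precise X) :
    sepMul X (fun σ => min (Y σ) (Z σ)) =
      fun σ => min (sepMul X Y σ) (sepMul X Z σ) := by
  funext ⟨s, h⟩
  obtain ⟨c, h₂, hsep⟩ := hprec.exists_sepMul_eq_mul s h
  simp only [hsep]
  exact mul_min c _ _

theorem precise_sepMul_min (X Y Z : Exp)
    (hX : OneBounded X) (hY : OneBounded Y) (hZ : OneBounded Z)
    (hprec : Precise X) :
    sepMul X (fun σ => min (Y σ) (Z σ)) =
      fun σ => min (sepMul X Y σ) (sepMul X Z σ) :=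
  precise_sepMul_min_general X Y Z hprec
end
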